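/- arXiv:2502.20003 — 8 statements merged into one kernel-verified Lean document; each statement's English description precedes it below -/
import Mathlib

section
/- For any f : ℝ → ℝ and any r₀, δ ∈ ℝ: r₀ ∈ argmin_{r}[(δ−r)²/2 + f(r)] if and only if s_f(r₀) ≤ δ ≤ i_f(r₀), where s_f(r₀) = sup_{r < r₀} [(f(r)−f(r₀))/(r−r₀) + (r+r₀)/2] and i_f(r₀) = inf_{r > r₀} [(f(r)−f(r₀))/(r−r₀) + (r+r₀)/2]. -/
/-- Chord slope function `s_f(r₀) = sup_{r < r₀} [(f r − f r₀)/(r − r₀) + (r + r₀)/2]`,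
valued in `EReal`. -/
noncomputable def sChord (f : ℝ → ℝ) (r₀ : ℝ) : EReal :=
  ⨆ r : {r : ℝ // r < r₀}, (((f r - f r₀) / ((r : ℝ) - r₀) + ((r : ℝ) + r₀) / 2 : ℝ) : EReal)

/-- Chord slope function `i_f(r₀) = inf_{r > r₀} [(f r − f r₀)/(r − r₀) + (r + r₀)/2]`,
valued in `EReal`. -/
noncomputable def iChord (f : ℝ → ℝ) (r₀ : ℝ) : EReal :=
  ⨅ r : {r : ℝ // r₀ < r}, (((f r - f r₀) / ((r : ℝ) - r₀) + ((r : ℝ) + r₀) / 2 : ℝ) : EReal)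

/-!
With `F r = f r + r²/2`, the slope of the chord of `F` from `r₀` to `r` is
`c r = (f r - f r₀)/(r - r₀) + (r + r₀)/2`, and the proximal objective satisfies
`[(δ - r)²/2 + f r] - [(δ - r₀)²/2 + f r₀] = (r - r₀) (c r - δ)`.
So `r₀` beats every `r < r₀` iff `c r ≤ δ` there, and every `r > r₀` iff `δ ≤ c r` there;
these are exactly `s_f(r₀) ≤ δ` and `δ ≤ i_f(r₀)`.
-/

namespace ProxChord

variable (f : ℝ → ℝ) (r₀ δ : ℝ)

noncomputable def chordSlope (r : ℝ) : ℝ :=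
  (f r - f r₀) / (r - r₀) + (r + r₀) / 2

noncomputable def proxObjective (r : ℝ) : ℝ :=
  (δ - r) ^ 2 / 2 + f r

theorem proxObjective_sub_eq {r : ℝ} (hr : r ≠ r₀) :
    proxObjective f δ r - proxObjective f δ r₀ = (r - r₀) * (chordSlope f r₀ r - δ) := by
  have hne : r - r₀ ≠ 0 := sub_ne_zero.mpr hr
  unfold proxObjective chordSlope
  field_simp
  ring

theorem proxObjective_le_iff_of_lt {r : ℝ} (hr : r < r₀) :
    proxObjective f δ r₀ ≤ proxObjective f δ r ↔ chordSlope f r₀ r ≤ δ := by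
  rw [← sub_nonneg, proxObjective_sub_eq f r₀ δ hr.ne, ← neg_mul_neg, neg_sub, neg_sub,
    mul_nonneg_iff_of_pos_left (sub_pos.mpr hr), sub_nonneg]

theorem proxObjective_le_iff_of_gt {r : ℝ} (hr : r₀ < r) :
    proxObjective f δ r₀ ≤ proxObjective f δ r ↔ δ ≤ chordSlope f r₀ r := by
  rw [← sub_nonneg, proxObjective_sub_eq f r₀ δ hr.ne', mul_nonneg_iff_of_pos_left (sub_pos.mpr hr),
    sub_nonneg]

theorem sChord_le_coe_iff : sChord f r₀ ≤ δ ↔ ∀ r < r₀, chordSlope f r₀ r ≤ δ := by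
  simp only [sChord, iSup_le_iff, EReal.coe_le_coe_iff, Subtype.forall]
  rfl

theorem coe_le_iChord_iff : (δ : EReal) ≤ iChord f r₀ ↔ ∀ r > r₀, δ ≤ chordSlope f r₀ r := by
  simp only [iChord, le_iInf_iff, EReal.coe_le_coe_iff, Subtype.forall]
  rfl

end ProxChord

open ProxChord in
/-- `r₀ ∈ argmin_r [(δ−r)²/2 + f r]` iff `s_f(r₀) ≤ δ ≤ i_f(r₀)`. -/
theorem prox_mem_iff_chord (f : ℝ → ℝ) (r₀ δ : ℝ) :
    (∀ r' : ℝ, (δ - r₀) ^ 2 / 2 + f r₀ ≤ (δ - r') ^ 2 / 2 + f r') ↔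
      sChord f r₀ ≤ (δ : EReal) ∧ (δ : EReal) ≤ iChord f r₀ := by
  change (∀ r, proxObjective f δ r₀ ≤ proxObjective f δ r) ↔ _
  rw [sChord_le_coe_iff, coe_le_iChord_iff]
  constructor
  · intro h
    exact ⟨fun r hr => (proxObjective_le_iff_of_lt f r₀ δ hr).mp (h r),
      fun r hr => (proxObjective_le_iff_of_gt f r₀ δ hr).mp (h r)⟩
  · rintro ⟨hleft, hright⟩ r
    rcases lt_trichotomy r r₀ with hr | rfl | hr
    · exact (proxObjective_le_iff_of_lt f r₀ δ hr).mpr (hleft r hr)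
    · exact le_rfl
    · exact (proxObjective_le_iff_of_gt f r₀ δ hr).mpr (hright r hr)
end

section
/- Let f : ℝ → ℝ and let (δ_n) be a sequence with |δ_n| → ∞ such that P_f(δ_n) ≠ ∅ for all n, and let r_min be a proximal selection. Then |r_min(δ_n)| → ∞. -/
/-!
A single proximal point `r₀ ∈ P_f(δ₀)` gives the quadratic minorant
`f s ≥ f r₀ + (δ₀ - r₀)²/2 - (δ₀ - s)²/2`, so `f` is bounded below on every interval `[-M, M]`.
If `r ∈ P_f(δ)` with `|r| ≤ M` and `δ > 0`, comparing with the competitor `M + 1` gives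
`(M + 1 - r)(2δ - r - M - 1) ≤ 2 (f (M + 1) - inf_{[-M, M]} f)`, which bounds `δ`;
negative `δ` reduce to this through `s ↦ -s`.
-/

open Filter

/-- `r ∈ P_f(δ)` in the paper's notation. -/
def IsProxPoint (f : ℝ → ℝ) (δ r : ℝ) : Prop :=
  ∀ s, (δ - r) ^ 2 / 2 + f r ≤ (δ - s) ^ 2 / 2 + f s

namespace IsProxPoint

variable {f : ℝ → ℝ} {δ r : ℝ}

theorem comp_neg (h : IsProxPoint f δ r) : IsProxPoint (fun s => f (-s)) (-δ) (-r) := by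
  intro s
  have := h (-s)
  simp only [neg_neg]
  linarith [show (-δ - -r) ^ 2 = (δ - r) ^ 2 by ring, show (-δ - s) ^ 2 = (δ - -s) ^ 2 by ring]

theorem exists_lowerBound_of_abs_le (h : IsProxPoint f δ r) (M : ℝ) :
    ∃ K, ∀ s, |s| ≤ M → K ≤ f s := by
  refine ⟨f r + (δ - r) ^ 2 / 2 - (|δ| + M) ^ 2 / 2, fun s hs => ?_⟩
  have hdist : (δ - s) ^ 2 ≤ (|δ| + M) ^ 2 := by
    rw [← sq_abs]
    exact pow_le_pow_left₀ (abs_nonneg _) ((abs_sub _ _).trans (by linarith)) 2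
  linarith [h s]

theorem le_of_abs_le {M K : ℝ} (hK : ∀ s, |s| ≤ M → K ≤ f s) (h : IsProxPoint f δ r)
    (hr : |r| ≤ M) : δ ≤ M + 1 + |f (M + 1) - K| := by
  obtain ⟨hr₁, hr₂⟩ := abs_le.1 hr
  have hcompare : (M + 1 - r) * (2 * δ - r - (M + 1)) ≤ 2 * (f (M + 1) - K) := by
    linarith [h (M + 1), hK r hr]
  rcases le_or_gt (2 * δ - r - (M + 1)) 0 with hδ | hδ
  · linarith [abs_nonneg (f (M + 1) - K)]
  · nlinarith [le_abs_self (f (M + 1) - K)]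

theorem abs_le_of_abs_le {M K : ℝ} (hK : ∀ s, |s| ≤ M → K ≤ f s) (h : IsProxPoint f δ r)
    (hr : |r| ≤ M) : |δ| ≤ M + 1 + |f (M + 1) - K| + |f (-(M + 1)) - K| := by
  have hneg := h.comp_neg.le_of_abs_le (fun s hs => hK (-s) ((abs_neg s).trans_le hs))
    ((abs_neg r).trans_le hr)
  have hpos := h.le_of_abs_le hK hr
  exact abs_le.2 ⟨by linarith [abs_nonneg (f (M + 1) - K)],
    by linarith [abs_nonneg (f (-(M + 1)) - K)]⟩

end IsProxPoint

/-- If `|δ_n| → ∞` and `r_min(δ_n) ∈ P_f(δ_n)` for all `n`, then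
`|r_min(δ_n)| → ∞`. -/
theorem prox_selection_coercive (f : ℝ → ℝ) (δ : ℕ → ℝ) (rmin : ℝ → ℝ)
    (hδ : Filter.Tendsto (fun n => |δ n|) Filter.atTop Filter.atTop)
    (hsel : ∀ n : ℕ, ∀ r' : ℝ,
      (δ n - rmin (δ n)) ^ 2 / 2 + f (rmin (δ n)) ≤ (δ n - r') ^ 2 / 2 + f r') :
    Filter.Tendsto (fun n => |rmin (δ n)|) Filter.atTop Filter.atTop := by
  have hprox : ∀ n, IsProxPoint f (δ n) (rmin (δ n)) := hsel
  refine tendsto_atTop.2 fun M => ?_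
  obtain ⟨K, hK⟩ := (hprox 0).exists_lowerBound_of_abs_le M
  filter_upwards [hδ.eventually_gt_atTop (M + 1 + |f (M + 1) - K| + |f (-(M + 1)) - K|)]
    with n hn
  by_contra! hr
  exact hn.not_ge ((hprox n).abs_le_of_abs_le hK hr.le)
end

section
/- Suppose f : ℝ → ℝ is V₀-weakly convex for some V₀ > 1, meaning r ↦ V₀ f(r) + r²/2 is convex. Then for every δ ∈ ℝ the proximal set P_f(δ) = argmin_r [(δ−r)²/2 + f(r)] is nonempty, and any proximal selection r_min of f is V₀/(V₀−1)-Lipschitz continuous on ℝ. -/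
set_option maxHeartbeats 1000000 in
/-- If `f` is `V₀`-weakly convex for some `V₀ > 1` (i.e. `r ↦ V₀ f r + r²/2`
is convex), then `P_f(δ)` is nonempty for every `δ`, and any proximal selection of `f`
is `V₀/(V₀−1)`-Lipschitz. -/
theorem prox_lipschitz_of_weaklyConvex (f : ℝ → ℝ) (V₀ : ℝ) (hV : 1 < V₀)
    (hwc : ConvexOn ℝ Set.univ (fun r => V₀ * f r + r ^ 2 / 2)) :
    (∀ δ : ℝ,
      {r : ℝ | ∀ r' : ℝ, (δ - r) ^ 2 / 2 + f r ≤ (δ - r') ^ 2 / 2 + f r'}.Nonempty) ∧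
    (∀ rmin : ℝ → ℝ,
      (∀ δ : ℝ, ∀ r' : ℝ,
        (δ - rmin δ) ^ 2 / 2 + f (rmin δ) ≤ (δ - r') ^ 2 / 2 + f r') →
      ∀ δ δ' : ℝ, |rmin δ - rmin δ'| ≤ V₀ / (V₀ - 1) * |δ - δ'|) := by
  have hV0 : (0:ℝ) < V₀ := by linarith
  have hV1 : (0:ℝ) < V₀ - 1 := by linarith
  set g : ℝ → ℝ := fun r => V₀ * f r + r ^ 2 / 2 with hgdef
  have hconv : ∀ x y t : ℝ, 0 ≤ t → t ≤ 1 →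
      g ((1 - t) * x + t * y) ≤ (1 - t) * g x + t * g y := by
    intro x y t ht0 ht1
    have := hwc.2 (Set.mem_univ x) (Set.mem_univ y)
      (by linarith : (0:ℝ) ≤ 1 - t) ht0 (by ring)
    simpa [smul_eq_mul] using this
  have hfeq : ∀ x : ℝ, f x = (g x - x ^ 2 / 2) / V₀ := by
    intro x
    rw [hgdef]
    field_simp
    ring
  constructor
  · -- existence of minimizers
    intro δ
    have hgc : Continuous g :=
      continuousOn_univ.mp (hwc.continuousOn isOpen_univ)
    have hfc : Continuous f := by
      have : f = fun x => (g x - x ^ 2 / 2) / V₀ := funext hfeq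
      rw [this]
      fun_prop
    set F : ℝ → ℝ := fun x => (δ - x) ^ 2 / 2 + f x with hFdef
    have hFc : Continuous F := by
      rw [hFdef]; fun_prop
    -- linear lower bound on g
    set C : ℝ := |g (-1) - g 0| + |g 1 - g 0| with hCdef
    have hC0 : 0 ≤ C := by positivity
    have hglb : ∀ x : ℝ, g 0 - C * |x| ≤ g x := by
      intro x
      rcases le_or_gt 0 x with hx | hx
      · have hx1 : (0:ℝ) < x + 1 := by linarith
        have h := hconv (-1) x (1 / (x + 1)) (by positivity)
          (by rw [div_le_one hx1]; linarith)
        have hpt : (1 - 1 / (x + 1)) * (-1) + 1 / (x + 1) * x = 0 := by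
          field_simp
          ring
        rw [hpt] at h
        have h2 : (x + 1) * g 0 ≤ x * g (-1) + g x := by
          have h3 := mul_le_mul_of_nonneg_left h hx1.le
          have he : (x + 1) * ((1 - 1 / (x + 1)) * g (-1) + 1 / (x + 1) * g x)
              = x * g (-1) + g x := by
            field_simp
            try ring
          linarith [he ▸ h3]
        have habs : g (-1) - g 0 ≤ C := by
          rw [hCdef]
          linarith [le_abs_self (g (-1) - g 0), abs_nonneg (g 1 - g 0)]
        rw [abs_of_nonneg hx]
        nlinarith [mul_le_mul_of_nonneg_left habs hx]
      · have hx' : 0 ≤ -x := by linarith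
        have hx1 : (0:ℝ) < 1 - x := by linarith
        have h := hconv 1 x (1 / (1 - x)) (by positivity)
          (by rw [div_le_one hx1]; linarith)
        have hpt : (1 - 1 / (1 - x)) * 1 + 1 / (1 - x) * x = 0 := by
          field_simp
          ring
        rw [hpt] at h
        have h2 : (1 - x) * g 0 ≤ (-x) * g 1 + g x := by
          have h3 := mul_le_mul_of_nonneg_left h hx1.le
          have he : (1 - x) * ((1 - 1 / (1 - x)) * g 1 + 1 / (1 - x) * g x)
              = (-x) * g 1 + g x := by
            field_simp
            try ring
          linarith [he ▸ h3]
        have habs : g 1 - g 0 ≤ C := by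
          rw [hCdef]
          linarith [le_abs_self (g 1 - g 0), abs_nonneg (g (-1) - g 0)]
        rw [abs_of_neg hx]
        nlinarith [mul_le_mul_of_nonneg_left habs hx']
    -- quadratic lower bound on F
    set α : ℝ := (V₀ - 1) / (2 * V₀) with hαdef
    have hα0 : 0 < α := by positivity
    set K : ℝ := |δ| + C / V₀ with hKdef
    have hK0 : 0 ≤ K := by positivity
    set c0 : ℝ := g 0 / V₀ with hc0def
    have hFlb : ∀ x : ℝ, α * x ^ 2 - K * |x| + c0 ≤ F x := by
      intro x
      have h1 := hglb x
      have hfx : (g 0 - C * |x|) / V₀ - x ^ 2 / (2 * V₀) ≤ f x := by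
        rw [hfeq x]
        have h5 : (g 0 - C * |x|) - x ^ 2 / 2 ≤ g x - x ^ 2 / 2 :=
          sub_le_sub_right h1 _
        calc (g 0 - C * |x|) / V₀ - x ^ 2 / (2 * V₀)
            = ((g 0 - C * |x|) - x ^ 2 / 2) / V₀ := by
              field_simp
              try ring
          _ ≤ (g x - x ^ 2 / 2) / V₀ := div_le_div_of_nonneg_right h5 hV0.le
      have hq : α * x ^ 2 - K * |x| + c0
          ≤ (δ - x) ^ 2 / 2 + ((g 0 - C * |x|) / V₀ - x ^ 2 / (2 * V₀)) := by
        have hdx : δ * x ≤ |δ| * |x| := by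
          calc δ * x ≤ |δ * x| := le_abs_self _
            _ = |δ| * |x| := abs_mul _ _
        rw [hαdef, hKdef, hc0def]
        have hexp : (δ - x) ^ 2 / 2 + ((g 0 - C * |x|) / V₀ - x ^ 2 / (2 * V₀))
            = (V₀ - 1) / (2 * V₀) * x ^ 2 - δ * x + δ ^ 2 / 2
              + g 0 / V₀ - C / V₀ * |x| := by
          field_simp
          ring
        rw [hexp]
        linarith [hdx, sq_nonneg δ]
      exact hq.trans (by simp only [hFdef]; linarith)
    -- choose radius
    set M : ℝ := max 1 ((K + |c0| + |F 0| + 1) / α) with hMdef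
    have hM1 : (1:ℝ) ≤ M := le_max_left _ _
    have hM0 : (0:ℝ) ≤ M := by linarith
    have hMα : K + |c0| + |F 0| + 1 ≤ α * M := by
      have := le_max_right 1 ((K + |c0| + |F 0| + 1) / α)
      calc K + |c0| + |F 0| + 1 = (K + |c0| + |F 0| + 1) / α * α := by
            field_simp
        _ ≤ M * α := by
            apply mul_le_mul_of_nonneg_right _ hα0.le
            rw [hMdef]; exact le_max_right _ _
        _ = α * M := by ring
    have hout : ∀ x : ℝ, M < |x| → F 0 < F x := by
      intro x hx
      have h1 := hFlb x
      have hxM : M ≤ |x| := hx.le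
      have hax : α * M - K ≤ α * |x| - K := by nlinarith
      have hpos : |c0| + |F 0| + 1 ≤ α * M - K := by linarith
      have h2 : α * |x| ^ 2 - K * |x| = |x| * (α * |x| - K) := by ring
      have h3 : |c0| + |F 0| + 1 ≤ |x| * (α * |x| - K) := by
        have h4 : (1:ℝ) ≤ |x| := le_trans hM1 hxM
        have h5 : 0 ≤ α * |x| - K := by linarith [abs_nonneg c0, abs_nonneg (F 0)]
        have h6 : 1 * (α * |x| - K) ≤ |x| * (α * |x| - K) :=
          mul_le_mul_of_nonneg_right h4 h5
        linarith [abs_nonneg c0, abs_nonneg (F 0)]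
      have hxx : |x| ^ 2 = x ^ 2 := sq_abs x
      have := h1
      rw [← hxx] at this
      have : |c0| + |F 0| + 1 + c0 ≤ F x := by linarith
      have hc1 : -|c0| ≤ c0 := neg_abs_le c0
      have hF0 : F 0 ≤ |F 0| := le_abs_self _
      linarith
    obtain ⟨r, hrmem, hrmin⟩ :=
      (isCompact_Icc (a := -M) (b := M)).exists_isMinOn
        ⟨0, by constructor <;> linarith⟩ hFc.continuousOn
    refine ⟨r, ?_⟩
    intro r'
    rcases le_or_gt |r'| M with hr' | hr'
    · have : r' ∈ Set.Icc (-M) M := by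
        constructor
        · linarith [neg_abs_le r']
        · linarith [le_abs_self r']
      exact hrmin this
    · have h0 : F r ≤ F 0 := hrmin (by constructor <;> linarith)
      exact h0.trans (hout r' hr').le
  · -- Lipschitz continuity
    intro rmin hopt δ δ'
    set r := rmin δ with hr
    set r' := rmin δ' with hr'
    set d : ℝ := r' - r with hd
    rcases eq_or_ne d 0 with hd0 | hd0
    · have hrr : r = r' := by rw [hd] at hd0; linarith [sub_eq_zero.mp hd0]
      rw [hrr, sub_self, abs_zero]
      positivity
    · -- key inequality for each t ∈ (0,1]
      have hkey : ∀ t : ℝ, 0 < t → t ≤ 1 →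
          (V₀ - 1) * (1 - t) * d ^ 2 ≤ V₀ * (d * (δ' - δ)) := by
        intro t ht0 ht1
        have h1 := hopt δ (r + t * d)
        have h2 := hopt δ' (r' - t * d)
        have h3 := hconv r r' t ht0.le ht1
        have h4 := hconv r' r t ht0.le ht1
        rw [show (1 - t) * r + t * r' = r + t * d by rw [hd]; ring] at h3
        rw [show (1 - t) * r' + t * r = r' - t * d by rw [hd]; ring] at h4
        simp only [hgdef] at h3 h4
        have h1' := mul_le_mul_of_nonneg_left h1 hV0.le
        have h2' := mul_le_mul_of_nonneg_left h2 hV0.le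
        rw [← hr] at h1'
        rw [← hr'] at h2'
        have hsum : t * ((V₀ - 1) * (1 - t) * d ^ 2 - V₀ * (d * (δ' - δ))) ≤ 0 := by
          rw [hd]
          nlinarith [h1', h2', h3, h4]
        nlinarith [hsum, ht0]
      have hmain : (V₀ - 1) * d ^ 2 ≤ V₀ * (d * (δ' - δ)) := by
        have hdd : 0 < (V₀ - 1) * d ^ 2 := by positivity
        apply le_of_forall_pos_le_add
        intro ε hε
        set t : ℝ := min 1 (ε / ((V₀ - 1) * d ^ 2)) with htdef
        have ht0 : 0 < t := lt_min one_pos (by positivity)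
        have ht1 : t ≤ 1 := min_le_left _ _
        have h := hkey t ht0 ht1
        have ht2 : t * ((V₀ - 1) * d ^ 2) ≤ ε := by
          have : t ≤ ε / ((V₀ - 1) * d ^ 2) := min_le_right _ _
          calc t * ((V₀ - 1) * d ^ 2)
              ≤ ε / ((V₀ - 1) * d ^ 2) * ((V₀ - 1) * d ^ 2) :=
                mul_le_mul_of_nonneg_right this hdd.le
            _ = ε := by field_simp
        nlinarith
      have habs : V₀ * (d * (δ' - δ)) ≤ V₀ * (|d| * |δ - δ'|) := by
        apply mul_le_mul_of_nonneg_left _ hV0.le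
        calc d * (δ' - δ) ≤ |d * (δ' - δ)| := le_abs_self _
          _ = |d| * |δ' - δ| := abs_mul _ _
          _ = |d| * |δ - δ'| := by rw [abs_sub_comm δ' δ]
      have hdpos : 0 < |d| := abs_pos.mpr hd0
      have hfin : (V₀ - 1) * |d| ≤ V₀ * |δ - δ'| := by
        have h1 : (V₀ - 1) * (|d| * |d|) ≤ V₀ * (|d| * |δ - δ'|) := by
          have : |d| * |d| = d ^ 2 := by rw [← abs_mul, ← sq, abs_sq]
          rw [this]
          exact hmain.trans habs
        nlinarith [h1, hdpos, mul_pos hV1 hdpos]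
      have heq : |r - r'| = |d| := by
        rw [hd]
        exact abs_sub_comm r r'
      rw [heq, div_mul_eq_mul_div, le_div_iff₀ hV1]
      nlinarith
end

section
/- Suppose f : ℝ → ℝ satisfies P_f(δ) ≠ ∅ for all δ ∈ ℝ, and let r_min be a proximal selection. For L ∈ (1, ∞): r_min is L-Lipschitz continuous if and only if f is L/(L−1)-weakly convex. Moreover r_min is 1-Lipschitz if and only if f is convex. -/
/-!
Write `φ r = f r + r ^ 2 / 2`. The selection property says that `δ` is a global subgradient of
`φ` at `rmin δ`, and `L / (L - 1)`-weak convexity of `f` (convexity of `f` when `L = 1`) is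
`L⁻¹`-strong convexity of `φ`.

If `φ` is `L⁻¹`-strongly convex, every subgradient inequality of `φ` improves to a quadratic
minorant of curvature `L⁻¹`; adding the minorants at `rmin δ` and `rmin δ'` gives
`(rmin δ - rmin δ')² ≤ L (δ - δ') (rmin δ - rmin δ')`, i.e. the Lipschitz bound.

Conversely, a Lipschitz selection is continuous and unbounded in both directions, hence
surjective. A right inverse `D` of `rmin` provides a subgradient `D r` of `φ` at every `r`, and
the Lipschitz bound makes `D` strongly monotone with constant `L⁻¹`. Chaining the minorants at
`r` and at the midpoint of `r` and `s` averages their curvature with `L⁻¹`, so iterating raises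
the curvature of all minorants to `L⁻¹`, which is strong convexity.
-/

open Set Filter Topology

lemma convexOn_const_smul_iff {𝕜 E β : Type*} [Semifield 𝕜] [LinearOrder 𝕜]
    [IsStrictOrderedRing 𝕜] [AddCommMonoid E] [AddCommMonoid β] [PartialOrder β] [SMul 𝕜 E]
    [Module 𝕜 β] [PosSMulMono 𝕜 β] {s : Set E} {f : E → β} {c : 𝕜} (hc : 0 < c) :
    ConvexOn 𝕜 s (fun x => c • f x) ↔ ConvexOn 𝕜 s f :=
  ⟨fun h => by simpa [smul_smul, inv_mul_cancel₀ hc.ne'] using h.smul (inv_nonneg.2 hc.le),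
    fun h => h.smul hc.le⟩

lemma inv_mul_sq_le_mul_iff_abs_le {L a b : ℝ} (hL : 0 < L) (hab : 0 ≤ a * b) :
    L⁻¹ * b ^ 2 ≤ a * b ↔ |b| ≤ L * |a| := by
  rcases eq_or_ne b 0 with rfl | hb
  · simpa using mul_nonneg hL.le (abs_nonneg a)
  rw [inv_mul_le_iff₀ hL, ← abs_of_nonneg hab, abs_mul, ← sq_abs b, sq, ← mul_assoc,
    mul_le_mul_iff_left₀ (abs_pos.2 hb)]

def HasStrongSubgradientAt (m : ℝ) (φ : ℝ → ℝ) (δ r : ℝ) : Prop :=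
  ∀ s, φ r + δ * (s - r) + m / 2 * (s - r) ^ 2 ≤ φ s

namespace HasStrongSubgradientAt

variable {m : ℝ} {φ : ℝ → ℝ} {δ r : ℝ}

lemma of_tendsto {ι : Type*} {l : Filter ι} [l.NeBot] {c : ι → ℝ} (hc : Tendsto c l (𝓝 m))
    (h : ∀ᶠ i in l, HasStrongSubgradientAt (c i) φ δ r) : HasStrongSubgradientAt m φ δ r :=
  fun s => le_of_tendsto (((hc.div_const 2).mul_const _).const_add _) (h.mono fun _ hi => hi s)

lemma mul_sq_sub_le {δ' r' : ℝ} (h : HasStrongSubgradientAt m φ δ r)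
    (h' : HasStrongSubgradientAt m φ δ' r') : m * (r - r') ^ 2 ≤ (δ - δ') * (r - r') := by
  linear_combination h r' + h' r

end HasStrongSubgradientAt

lemma StrongConvexOn.hasStrongSubgradientAt {m : ℝ} {φ : ℝ → ℝ} {δ r : ℝ}
    (hφ : StrongConvexOn univ m φ) (h : HasStrongSubgradientAt 0 φ δ r) :
    HasStrongSubgradientAt m φ δ r := by
  have hc : Tendsto (fun t : ℝ => (1 - t) * m) (𝓝[>] 0) (𝓝 m) := by
    refine tendsto_nhdsWithin_of_tendsto_nhds ?_
    simpa using (Continuous.tendsto (f := fun t : ℝ => (1 - t) * m) (by fun_prop) 0)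
  -- the subgradient inequality at `(1 - t) r + t s` against strong convexity on `[r, s]`
  -- yields curvature `(1 - t) m`
  refine .of_tendsto hc (eventually_of_mem (Ioo_mem_nhdsGT one_pos) fun t ⟨ht0, ht1⟩ s => ?_)
  have hconv := hφ.2 (mem_univ r) (mem_univ s) (sub_nonneg.2 ht1.le) ht0.le (sub_add_cancel 1 t)
  have hsub := h ((1 - t) • r + t • s)
  simp only [smul_eq_mul, Real.norm_eq_abs, sq_abs] at hconv hsub
  refine le_of_mul_le_mul_left ?_ ht0
  linear_combination hsub + hconv

lemma strongConvexOn_of_hasStrongSubgradientAt {m : ℝ} {φ : ℝ → ℝ}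
    (h : ∀ r, ∃ δ, HasStrongSubgradientAt m φ δ r) : StrongConvexOn univ m φ := by
  refine ⟨convex_univ, fun x _ y _ a b ha hb hab => ?_⟩
  obtain ⟨δ, hδ⟩ := h (a • x + b • y)
  obtain rfl : b = 1 - a := by linarith
  simp only [smul_eq_mul, Real.norm_eq_abs, sq_abs]
  linear_combination a * hδ x + (1 - a) * hδ y

section StronglyMonotone

variable {m : ℝ} {φ D : ℝ → ℝ} (hmono : ∀ r s, m * (r - s) ^ 2 ≤ (D r - D s) * (r - s))
include hmono

lemma hasStrongSubgradientAt_average {c : ℝ} (hc : ∀ r, HasStrongSubgradientAt c φ (D r) r)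
    (r : ℝ) : HasStrongSubgradientAt ((m + c) / 2) φ (D r) r := fun s => by
  linear_combination hc r ((r + s) / 2) + hc ((r + s) / 2) s + hmono ((r + s) / 2) r

lemma hasStrongSubgradientAt_of_strongMonotone (hD : ∀ r, HasStrongSubgradientAt 0 φ (D r) r)
    (r : ℝ) : HasStrongSubgradientAt m φ (D r) r := by
  have hiter : ∀ n : ℕ, ∀ r, HasStrongSubgradientAt (m * (1 - (1 / 2) ^ n)) φ (D r) r := by
    intro n
    induction n with
    | zero => simpa using hD
    | succ n ih =>
      convert hasStrongSubgradientAt_average hmono ih using 2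
      ring
  have hlim : Tendsto (fun n : ℕ => m * (1 - (1 / 2 : ℝ) ^ n)) atTop (𝓝 m) := by
    simpa using ((tendsto_pow_atTop_nhds_zero_of_lt_one (r := (1 / 2 : ℝ)) (by norm_num)
      (by norm_num)).const_sub 1).const_mul m
  exact .of_tendsto hlim (.of_forall fun n => hiter n r)

end StronglyMonotone

def IsProxSelection (f rmin : ℝ → ℝ) : Prop :=
  ∀ δ r' : ℝ, (δ - rmin δ) ^ 2 / 2 + f (rmin δ) ≤ (δ - r') ^ 2 / 2 + f r'

namespace IsProxSelection

variable {f rmin : ℝ → ℝ} {L : ℝ}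

lemma hasStrongSubgradientAt (h : IsProxSelection f rmin) (δ : ℝ) :
    HasStrongSubgradientAt 0 (fun r => f r + r ^ 2 / 2) δ (rmin δ) := fun s => by
  linear_combination h δ s

lemma comp_neg (h : IsProxSelection f rmin) :
    IsProxSelection (fun r => f (-r)) (fun δ => -rmin (-δ)) := fun δ r' => by
  simp only [neg_neg]
  convert h (-δ) (-r') using 3 <;> ring

lemma exists_le_apply (h : IsProxSelection f rmin) (r : ℝ) : ∃ δ, r ≤ rmin δ := by
  by_contra! hlt
  set φ := fun r => f r + r ^ 2 / 2
  set δ := max 0 (φ (r + 1) - φ (rmin 0)) + 1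
  have hmin : φ (rmin 0) ≤ φ (rmin δ) := by simpa using h.hasStrongSubgradientAt 0 (rmin δ)
  have hsub : φ (rmin δ) + δ * (r + 1 - rmin δ) ≤ φ (r + 1) := by
    simpa using h.hasStrongSubgradientAt δ (r + 1)
  have hgap : δ ≤ δ * (r + 1 - rmin δ) :=
    le_mul_of_one_le_right (by positivity) (by linarith [hlt δ])
  linarith [le_max_right 0 (φ (r + 1) - φ (rmin 0))]

lemma surjective (h : IsProxSelection f rmin) (hc : Continuous rmin) :
    Function.Surjective rmin := by
  intro r
  obtain ⟨a, ha⟩ := h.exists_le_apply r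
  obtain ⟨b, hb⟩ := h.comp_neg.exists_le_apply (-r)
  exact intermediate_value_univ (-b) a hc ⟨neg_le_neg_iff.1 hb, ha⟩

lemma lipschitz_of_strongConvexOn (h : IsProxSelection f rmin) (hL : 0 < L)
    (hφ : StrongConvexOn univ L⁻¹ (fun r => f r + r ^ 2 / 2)) (δ δ' : ℝ) :
    |rmin δ - rmin δ'| ≤ L * |δ - δ'| := by
  have hquad := (hφ.hasStrongSubgradientAt (h.hasStrongSubgradientAt δ)).mul_sq_sub_le
    (hφ.hasStrongSubgradientAt (h.hasStrongSubgradientAt δ'))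
  exact (inv_mul_sq_le_mul_iff_abs_le hL (le_trans (by positivity) hquad)).1 hquad

lemma strongConvexOn_of_lipschitz (h : IsProxSelection f rmin) (hL : 0 < L)
    (hlip : ∀ δ δ', |rmin δ - rmin δ'| ≤ L * |δ - δ'|) :
    StrongConvexOn univ L⁻¹ (fun r => f r + r ^ 2 / 2) := by
  have hcont : Continuous rmin :=
    (LipschitzWith.of_dist_le_mul (K := ⟨L, hL.le⟩) fun a b => hlip a b).continuous
  set D := Function.surjInv (h.surjective hcont)
  have hD : ∀ r, rmin (D r) = r := Function.surjInv_eq _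
  have hsub : ∀ r, HasStrongSubgradientAt 0 (fun r => f r + r ^ 2 / 2) (D r) r := fun r => by
    simpa only [hD] using h.hasStrongSubgradientAt (D r)
  have hmono : ∀ r s, L⁻¹ * (r - s) ^ 2 ≤ (D r - D s) * (r - s) := fun r s => by
    refine (inv_mul_sq_le_mul_iff_abs_le hL (by simpa using (hsub r).mul_sq_sub_le (hsub s))).2 ?_
    simpa only [hD] using hlip (D r) (D s)
  exact strongConvexOn_of_hasStrongSubgradientAt fun r =>
    ⟨D r, hasStrongSubgradientAt_of_strongMonotone hmono hsub r⟩

lemma lipschitz_iff_strongConvexOn (h : IsProxSelection f rmin) (hL : 0 < L) :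
    (∀ δ δ', |rmin δ - rmin δ'| ≤ L * |δ - δ'|) ↔
      StrongConvexOn univ L⁻¹ (fun r => f r + r ^ 2 / 2) :=
  ⟨h.strongConvexOn_of_lipschitz hL, h.lipschitz_of_strongConvexOn hL⟩

end IsProxSelection

/-- Suppose `P_f(δ) ≠ ∅` for all `δ` and `rmin` is a proximal selection.
For `L ∈ (1,∞)`, `rmin` is `L`-Lipschitz iff `f` is `L/(L−1)`-weakly convex; and `rmin`
is `1`-Lipschitz iff `f` is convex. -/
theorem prox_lipschitz_iff_weaklyConvex (f : ℝ → ℝ) (rmin : ℝ → ℝ)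
    (hsel : ∀ δ : ℝ, ∀ r' : ℝ,
      (δ - rmin δ) ^ 2 / 2 + f (rmin δ) ≤ (δ - r') ^ 2 / 2 + f r') :
    (∀ L : ℝ, 1 < L →
      ((∀ δ δ' : ℝ, |rmin δ - rmin δ'| ≤ L * |δ - δ'|) ↔
        ConvexOn ℝ Set.univ (fun r => (L / (L - 1)) * f r + r ^ 2 / 2))) ∧
    ((∀ δ δ' : ℝ, |rmin δ - rmin δ'| ≤ |δ - δ'|) ↔ ConvexOn ℝ Set.univ f) := by
  have hprox : IsProxSelection f rmin := hsel
  refine ⟨fun L hL => ?_, ?_⟩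
  · have hL1 : 0 < L - 1 := sub_pos.2 hL
    have hweak : (fun r => L / (L - 1) * f r + r ^ 2 / 2) =
        fun r => (L / (L - 1)) • (f r + r ^ 2 / 2 - L⁻¹ / 2 * ‖r‖ ^ 2) := by
      funext r
      rw [Real.norm_eq_abs, sq_abs, smul_eq_mul]
      field_simp
      ring
    rw [hprox.lipschitz_iff_strongConvexOn (by linarith), strongConvexOn_iff_convex, hweak,
      convexOn_const_smul_iff (by positivity)]
  · have hf : f = fun r => f r + r ^ 2 / 2 - (1 : ℝ)⁻¹ / 2 * ‖r‖ ^ 2 := by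
      funext r
      rw [Real.norm_eq_abs, sq_abs]
      ring
    rw [hf, ← strongConvexOn_iff_convex]
    simpa only [one_mul] using hprox.lipschitz_iff_strongConvexOn one_pos
end

section
/- Suppose f : ℝ → ℝ satisfies P_f(δ) ≠ ∅ for all δ ∈ ℝ. Then a proximal selection r_min of f is continuous on ℝ if and only if f is strictly 1-weakly convex (i.e., r ↦ f(r) + r²/2 is strictly convex). In that case P_f(δ) is a singleton for every δ and r_min is surjective onto ℝ. -/
/-!
Writing `g r = f r + r ^ 2 / 2`, the proximal objective is `g r - δ r + δ ^ 2 / 2`, so `P_f(δ)`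
is the set of points at which `δ` is a subgradient of `g`. Subgradients are monotone, hence so is
`rmin`, and its range is unbounded in both directions. If `rmin` is continuous it is therefore
surjective, so `g` has a supporting line at every point; a line touching `g` at two points would
make `rmin` jump at its slope, so every supporting line touches `g` once, which is strict
convexity. Conversely a strictly convex `g` has a supporting line at every point (slope: the
right derivative) touching it only there, so `rmin` is a surjective monotone map, hence
continuous.
-/

open Set Filter Topology

def HasSubgradientAt (g : ℝ → ℝ) (δ x : ℝ) : Prop := ∀ y, g x + δ * (y - x) ≤ g y

namespace HasSubgradientAt

variable {g : ℝ → ℝ} {δ δ' x x' : ℝ}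

lemma le_of_lt (h : HasSubgradientAt g δ x) (h' : HasSubgradientAt g δ' x') (hδ : δ < δ') :
    x ≤ x' := by
  by_contra! hx
  nlinarith [h x', h' x]

lemma comp_neg (h : HasSubgradientAt g δ x) : HasSubgradientAt (fun y => g (-y)) (-δ) (-x) :=
  fun y => by simp only [neg_neg]; linarith [h (-y)]

lemma of_le (h : HasSubgradientAt g δ x) (hx' : g x' ≤ g x + δ * (x' - x)) :
    HasSubgradientAt g δ x' :=
  fun y => by linarith [h y]

end HasSubgradientAt

lemma ConvexOn.exists_hasSubgradientAt {g : ℝ → ℝ} (hg : ConvexOn ℝ univ g) (x : ℝ) :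
    ∃ δ, HasSubgradientAt g δ x := by
  have hx : x ∈ interior univ := by simp
  refine ⟨derivWithin g (Ioi x) x, fun y => ?_⟩
  rcases lt_trichotomy y x with hyx | rfl | hxy
  · have hslope := (hg.slope_le_leftDeriv_of_mem_interior (mem_univ y) hx hyx).trans
      (hg.leftDeriv_le_rightDeriv_of_mem_interior hx)
    rw [slope_def_field, div_le_iff₀ (sub_pos.2 hyx)] at hslope
    linarith
  · simp
  · have hslope := hg.rightDeriv_le_slope_of_mem_interior hx (mem_univ y) hxy
    rw [slope_def_field, le_div_iff₀ (sub_pos.2 hxy)] at hslope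
    linarith

lemma StrictConvexOn.eq_of_hasSubgradientAt {g : ℝ → ℝ} {δ x y : ℝ}
    (hg : StrictConvexOn ℝ univ g) (hx : HasSubgradientAt g δ x) (hy : HasSubgradientAt g δ y) :
    x = y := by
  by_contra hxy
  have hmid := hg.2 (mem_univ x) (mem_univ y) hxy (by norm_num : (0 : ℝ) < 1 / 2)
    (by norm_num : (0 : ℝ) < 1 / 2) (by norm_num)
  simp only [smul_eq_mul] at hmid
  linarith [hx (1 / 2 * x + 1 / 2 * y), hy (1 / 2 * x + 1 / 2 * y)]

lemma strictConvexOn_univ_of_forall_exists_unique_hasSubgradientAt {g : ℝ → ℝ}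
    (h : ∀ z, ∃ δ, HasSubgradientAt g δ z ∧ ∀ x, HasSubgradientAt g δ x → x = z) :
    StrictConvexOn ℝ univ g := by
  refine ⟨convex_univ, fun x _ y _ hxy a b ha hb hab => ?_⟩
  obtain ⟨δ, hz, huniq⟩ := h (a • x + b • y)
  simp only [smul_eq_mul] at hz huniq ⊢
  set z := a * x + b * y
  by_contra! hle
  have hgap_x : 0 ≤ g x - (g z + δ * (x - z)) := by linarith [hz x]
  have hgap_y : 0 ≤ g y - (g z + δ * (y - z)) := by linarith [hz y]
  -- the convex combination of the two gaps is the Jensen gap, which is `≤ 0` by `hle`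
  have hgap : a * (g x - (g z + δ * (x - z))) + b * (g y - (g z + δ * (y - z))) ≤ 0 := by
    have hb' : b = 1 - a := by linarith
    subst hb'
    nlinarith
  have hxz := huniq x (hz.of_le (by nlinarith [mul_nonneg hb.le hgap_y]))
  have hyz := huniq y (hz.of_le (by nlinarith [mul_nonneg ha.le hgap_x]))
  exact hxy (hxz.trans hyz.symm)

section Selection

variable {g s : ℝ → ℝ}

lemma monotone_of_forall_hasSubgradientAt (hs : ∀ δ, HasSubgradientAt g δ (s δ)) :
    Monotone s := fun a b hab =>
  hab.eq_or_lt.elim (fun h => h ▸ le_rfl) fun h => (hs a).le_of_lt (hs b) h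

lemma exists_le_apply_of_forall_hasSubgradientAt (hs : ∀ δ, HasSubgradientAt g δ (s δ))
    (z : ℝ) : ∃ δ, z ≤ s δ := by
  by_contra! h
  -- `s 0` minimizes `g`, so the tilt by this `δ` would make `z + 1` beat `s δ`
  set δ := g (z + 1) - g (s 0) + 1
  have hδ : 0 < δ := by linarith [hs 0 (z + 1)]
  nlinarith [hs δ (z + 1), hs 0 (s δ), h δ]

lemma exists_apply_le_of_forall_hasSubgradientAt (hs : ∀ δ, HasSubgradientAt g δ (s δ))
    (z : ℝ) : ∃ δ, s δ ≤ z := by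
  obtain ⟨δ, hδ⟩ := exists_le_apply_of_forall_hasSubgradientAt
    (s := fun δ => -s (-δ)) (fun δ => by simpa using (hs (-δ)).comp_neg) (-z)
  exact ⟨-δ, by linarith⟩

lemma surjective_of_forall_hasSubgradientAt (hs : ∀ δ, HasSubgradientAt g δ (s δ))
    (hc : Continuous s) : Function.Surjective s :=
  have hmono := monotone_of_forall_hasSubgradientAt hs
  hc.surjective (tendsto_atTop_atTop_of_monotone hmono
    (exists_le_apply_of_forall_hasSubgradientAt hs))
    (tendsto_atBot_atBot_of_monotone hmono (exists_apply_le_of_forall_hasSubgradientAt hs))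

lemma eq_of_continuousAt_of_forall_hasSubgradientAt (hs : ∀ δ, HasSubgradientAt g δ (s δ))
    {δ x : ℝ} (hc : ContinuousAt s δ) (hx : HasSubgradientAt g δ x) : x = s δ := by
  apply le_antisymm
  · refine ge_of_tendsto (hc.tendsto.mono_left (nhdsWithin_le_nhds (s := Ioi δ))) ?_
    filter_upwards [self_mem_nhdsWithin] with δ' hδ' using hx.le_of_lt (hs δ') hδ'
  · refine le_of_tendsto (hc.tendsto.mono_left (nhdsWithin_le_nhds (s := Iio δ))) ?_
    filter_upwards [self_mem_nhdsWithin] with δ' hδ' using (hs δ').le_of_lt hx hδ'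

lemma continuous_iff_strictConvexOn_of_forall_hasSubgradientAt
    (hs : ∀ δ, HasSubgradientAt g δ (s δ)) : Continuous s ↔ StrictConvexOn ℝ univ g := by
  refine ⟨fun hc => strictConvexOn_univ_of_forall_exists_unique_hasSubgradientAt fun z => ?_,
    fun hg => (monotone_of_forall_hasSubgradientAt hs).continuous_of_surjective fun z => ?_⟩
  · obtain ⟨δ, rfl⟩ := surjective_of_forall_hasSubgradientAt hs hc z
    exact ⟨δ, hs δ, fun x hx =>
      eq_of_continuousAt_of_forall_hasSubgradientAt hs hc.continuousAt hx⟩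
  · obtain ⟨δ, hδ⟩ := hg.convexOn.exists_hasSubgradientAt z
    exact ⟨δ, hg.eq_of_hasSubgradientAt (hs δ) hδ⟩

end Selection

lemma hasSubgradientAt_add_sq_div_two_iff {f : ℝ → ℝ} {δ x : ℝ} :
    HasSubgradientAt (fun r => f r + r ^ 2 / 2) δ x ↔
      ∀ r', (δ - x) ^ 2 / 2 + f x ≤ (δ - r') ^ 2 / 2 + f r' :=
  forall_congr' fun r' => by constructor <;> intro h <;> linarith

/-- Suppose `P_f(δ) ≠ ∅` for all `δ` and `rmin` is a proximal selection.
Then `rmin` is continuous iff `f` is strictly 1-weakly convex; in that case `P_f(δ)` is a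
singleton for every `δ` and `rmin` is surjective. -/
theorem prox_continuous_iff_strictWeaklyConvex (f : ℝ → ℝ) (rmin : ℝ → ℝ)
    (hsel : ∀ δ : ℝ, ∀ r' : ℝ,
      (δ - rmin δ) ^ 2 / 2 + f (rmin δ) ≤ (δ - r') ^ 2 / 2 + f r') :
    (Continuous rmin ↔ StrictConvexOn ℝ Set.univ (fun r => f r + r ^ 2 / 2)) ∧
    (StrictConvexOn ℝ Set.univ (fun r => f r + r ^ 2 / 2) →
      (∀ δ : ℝ,
        {r : ℝ | ∀ r' : ℝ, (δ - r) ^ 2 / 2 + f r ≤ (δ - r') ^ 2 / 2 + f r'} = {rmin δ}) ∧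
      Function.Surjective rmin) := by
  have hs : ∀ δ, HasSubgradientAt (fun r => f r + r ^ 2 / 2) δ (rmin δ) := fun δ =>
    hasSubgradientAt_add_sq_div_two_iff.2 (hsel δ)
  have hcont := continuous_iff_strictConvexOn_of_forall_hasSubgradientAt hs
  refine ⟨hcont, fun hg => ⟨fun δ => ?_, ?_⟩⟩
  · ext r
    rw [mem_ofPred_eq, mem_singleton_iff, ← hasSubgradientAt_add_sq_div_two_iff]
    exact ⟨fun hr => hg.eq_of_hasSubgradientAt hr (hs δ), fun hr => hr ▸ hs δ⟩
  · exact surjective_of_forall_hasSubgradientAt hs (hcont.2 hg)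
end

section
/- Let f₁, f₂, … be convex functions ℝ → ℝ converging pointwise to a convex function f on an open interval O. If f is differentiable at s ∈ O, then for every ε > 0 there exists N such that for all d ≥ N, every subgradient of f_d at s lies within ε of f'(s); in particular the derivatives (where they exist) of f_d at s converge to f'(s). -/
/-!
A subgradient `y` of `g` at `s` is squeezed between the chord slopes of `g` to the left and to
the right of `s`. Since `f` is differentiable at `s`, there are points `a < s < b` of `O` whose
chord slopes for `f` lie within `ε` of `f'`; the chord slopes of `f_d` at these two fixed chords
converge to those of `f`, so eventually every subgradient of `f_d` at `s` is trapped within `ε`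
of `f'`.
-/

open Filter Topology

section Subgradient

variable {g : ℝ → ℝ} {s y x : ℝ}

theorem le_slope_of_forall_add_mul_le (hy : ∀ x, g s + y * (x - s) ≤ g x) (hx : s < x) :
    y ≤ slope g s x := by
  rw [slope_def_field, le_div_iff₀ (sub_pos.2 hx)]
  linarith [hy x]

theorem slope_le_of_forall_add_mul_le (hy : ∀ x, g s + y * (x - s) ≤ g x) (hx : x < s) :
    slope g s x ≤ y := by
  rw [slope_def_field, div_le_iff_of_neg (sub_neg.2 hx)]
  linarith [hy x]

end Subgradient

theorem Filter.Tendsto.slope {ι 𝕜 E : Type*} [Field 𝕜] [AddCommGroup E] [Module 𝕜 E]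
    [TopologicalSpace E] [IsTopologicalAddGroup E] [ContinuousConstSMul 𝕜 E]
    {l : Filter ι} {g : ι → 𝕜 → E} {f : 𝕜 → E} {a b : 𝕜}
    (ha : Tendsto (fun i ↦ g i a) l (𝓝 (f a))) (hb : Tendsto (fun i ↦ g i b) l (𝓝 (f b))) :
    Tendsto (fun i ↦ slope (g i) a b) l (𝓝 (slope f a b)) := by
  simpa only [slope_def_module] using (hb.sub ha).const_smul (b - a)⁻¹

section ChordSlopes

variable {f : ℝ → ℝ} {f' s c : ℝ} {O : Set ℝ}

theorem HasDerivAt.exists_gt_mem_slope_lt (hf : HasDerivAt f f' s) (hO : O ∈ 𝓝 s)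
    (hc : f' < c) : ∃ b, s < b ∧ b ∈ O ∧ slope f s b < c :=
  (eventually_mem_nhdsWithin.and ((eventually_nhdsWithin_of_eventually_nhds hO).and
    ((hasDerivAt_iff_tendsto_slope_left_right.1 hf).2.eventually_lt_const hc))).exists

theorem HasDerivAt.exists_lt_mem_lt_slope (hf : HasDerivAt f f' s) (hO : O ∈ 𝓝 s)
    (hc : c < f') : ∃ a, a < s ∧ a ∈ O ∧ c < slope f s a :=
  (eventually_mem_nhdsWithin.and ((eventually_nhdsWithin_of_eventually_nhds hO).and
    ((hasDerivAt_iff_tendsto_slope_left_right.1 hf).1.eventually_const_lt hc))).exists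

end ChordSlopes

theorem subgradient_convergence_general (fseq : ℕ → ℝ → ℝ) (f : ℝ → ℝ) (O : Set ℝ)
    (hO : IsOpen O)
    (hlim : ∀ x ∈ O, Filter.Tendsto (fun d => fseq d x) Filter.atTop (nhds (f x)))
    (s : ℝ) (hs : s ∈ O) (f' : ℝ) (hdiff : HasDerivAt f f' s) :
    ∀ ε > (0 : ℝ), ∃ N : ℕ, ∀ d ≥ N, ∀ y : ℝ,
      (∀ x : ℝ, fseq d s + y * (x - s) ≤ fseq d x) → |y - f'| ≤ ε := by
  intro ε hε
  obtain ⟨a, has, haO, ha⟩ :=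
    hdiff.exists_lt_mem_lt_slope (hO.mem_nhds hs) (sub_lt_self f' hε)
  obtain ⟨b, hsb, hbO, hb⟩ :=
    hdiff.exists_gt_mem_slope_lt (hO.mem_nhds hs) (lt_add_of_pos_right f' hε)
  have hslope_a := ((hlim s hs).slope (hlim a haO)).eventually_const_lt ha
  have hslope_b := ((hlim s hs).slope (hlim b hbO)).eventually_lt_const hb
  obtain ⟨N, hN⟩ := eventually_atTop.1 (hslope_a.and hslope_b)
  refine ⟨N, fun d hd y hy ↦ abs_le.2 ⟨?_, ?_⟩⟩
  · linarith [(hN d hd).1, slope_le_of_forall_add_mul_le hy has]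
  · linarith [(hN d hd).2, le_slope_of_forall_add_mul_le hy hsb]

/-- Let `f_d` be convex functions converging pointwise on an open set `O` to
a convex `f`, differentiable at `s ∈ O` with derivative `f'`. Then for every `ε > 0`
there is `N` such that for all `d ≥ N`, every subgradient `y` of `f_d` at `s` (i.e. every
`y` with `f_d s + y (x − s) ≤ f_d x` for all `x`) satisfies `|y − f'| ≤ ε`. -/
theorem subgradient_convergence (fseq : ℕ → ℝ → ℝ) (f : ℝ → ℝ) (O : Set ℝ)
    (hO : IsOpen O)
    (hconv : ∀ d, ConvexOn ℝ Set.univ (fseq d))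
    (hfconv : ConvexOn ℝ Set.univ f)
    (hlim : ∀ x ∈ O, Filter.Tendsto (fun d => fseq d x) Filter.atTop (nhds (f x)))
    (s : ℝ) (hs : s ∈ O) (f' : ℝ) (hdiff : HasDerivAt f f' s) :
    ∀ ε > (0 : ℝ), ∃ N : ℕ, ∀ d ≥ N, ∀ y : ℝ,
      (∀ x : ℝ, fseq d s + y * (x - s) ≤ fseq d x) → |y - f'| ≤ ε :=
  subgradient_convergence_general fseq f O hO hlim s hs f' hdiff
end

section
/- The Tukey biweight loss with coercive modification, defined by L_T(u) = (ξ²/6)[1 − (1 − u²/ξ²)³] for |u| ≤ ξ and L_T(u) = ξ²/6 + ϱ(|u| − ξ)³ for |u| > ξ (with ξ, ϱ > 0), is (5/4)-weakly convex: the function u ↦ (5/4) L_T(u) + u²/2 is convex. -/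
open Set Filter

/-- The Tukey biweight loss with coercive modification parameter `ϱ`. -/
noncomputable def tukeyLoss (ξ ϱ : ℝ) (u : ℝ) : ℝ :=
  if |u| ≤ ξ then (ξ ^ 2 / 6) * (1 - (1 - u ^ 2 / ξ ^ 2) ^ 3)
  else ξ ^ 2 / 6 + ϱ * (|u| - ξ) ^ 3

/-- Explicit first derivative of `u ↦ (5/4) L_T(u) + u²/2`. -/
noncomputable def tukeyPhi (ξ ϱ : ℝ) (u : ℝ) : ℝ :=
  if |u| ≤ ξ then 5 / 4 * (u * (1 - u ^ 2 / ξ ^ 2) ^ 2) + u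
  else if 0 ≤ u then 15 / 4 * ϱ * (u - ξ) ^ 2 + u
  else -(15 / 4 * ϱ * (-u - ξ) ^ 2) + u

/-- Explicit second derivative of `u ↦ (5/4) L_T(u) + u²/2`. -/
noncomputable def tukeyPsi (ξ ϱ : ℝ) (u : ℝ) : ℝ :=
  if |u| ≤ ξ then 1 + 5 / 4 * ((1 - u ^ 2 / ξ ^ 2) * (1 - 5 * u ^ 2 / ξ ^ 2))
  else 1 + 15 / 2 * ϱ * (|u| - ξ)

/-- Gluing a derivative at a point from eventual equality on the two half-lines. -/
lemma glueDeriv {f f1 f2 : ℝ → ℝ} {a d : ℝ}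
    (h1 : f =ᶠ[nhdsWithin a (Set.Iic a)] f1) (h2 : f =ᶠ[nhdsWithin a (Set.Ici a)] f2)
    (e1 : f a = f1 a) (e2 : f a = f2 a)
    (d1 : HasDerivAt f1 d a) (d2 : HasDerivAt f2 d a) : HasDerivAt f d a := by
  have l : HasDerivWithinAt f d (Set.Iic a) a :=
    (d1.hasDerivWithinAt).congr_of_eventuallyEq h1 e1
  have r : HasDerivWithinAt f d (Set.Ici a) a :=
    (d2.hasDerivWithinAt).congr_of_eventuallyEq h2 e2
  have := l.union r
  rw [Set.Iic_union_Ici] at this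
  exact hasDerivWithinAt_univ.mp this

/-- inner piece of `f` -/
noncomputable def Fin' (ξ x : ℝ) : ℝ :=
  (5 / 4) * ((ξ ^ 2 / 6) * (1 - (1 - x ^ 2 / ξ ^ 2) ^ 3)) + x ^ 2 / 2
/-- right outer piece of `f` -/
noncomputable def Fout (ξ ϱ x : ℝ) : ℝ := (5 / 4) * (ξ ^ 2 / 6 + ϱ * (x - ξ) ^ 3) + x ^ 2 / 2
/-- left outer piece of `f` -/
noncomputable def Fout' (ξ ϱ x : ℝ) : ℝ := (5 / 4) * (ξ ^ 2 / 6 + ϱ * (-x - ξ) ^ 3) + x ^ 2 / 2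
/-- inner piece of `tukeyPhi` -/
noncomputable def Pin (ξ x : ℝ) : ℝ := 5 / 4 * (x * (1 - x ^ 2 / ξ ^ 2) ^ 2) + x
/-- right outer piece of `tukeyPhi` -/
noncomputable def Pout (ξ ϱ x : ℝ) : ℝ := 15 / 4 * ϱ * (x - ξ) ^ 2 + x
/-- left outer piece of `tukeyPhi` -/
noncomputable def Pout' (ξ ϱ x : ℝ) : ℝ := -(15 / 4 * ϱ * (-x - ξ) ^ 2) + x

lemma hasDerivAt_Fin {ξ : ℝ} (hξ : ξ ≠ 0) (u : ℝ) : HasDerivAt (Fin' ξ) (Pin ξ u) u := by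
  have h1 : HasDerivAt (fun x : ℝ => x ^ 2) (2 * u) u := by simpa using hasDerivAt_pow 2 u
  have h2 : HasDerivAt (fun x : ℝ => 1 - x ^ 2 / ξ ^ 2) (-(2 * u / ξ ^ 2)) u := by
    simpa using (h1.div_const (ξ ^ 2)).const_sub 1
  have h3 := (((h2.pow 3).const_sub 1).const_mul (ξ ^ 2 / 6)).const_mul (5 / 4 : ℝ)
  have h5 := h3.add (h1.div_const 2)
  refine h5.congr_deriv ?_
  simp only [Pin]
  norm_num
  field_simp
  ring

lemma hasDerivAt_Fout (ξ ϱ u : ℝ) : HasDerivAt (Fout ξ ϱ) (Pout ξ ϱ u) u := by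
  have h1 : HasDerivAt (fun x : ℝ => x ^ 2) (2 * u) u := by simpa using hasDerivAt_pow 2 u
  have h2 : HasDerivAt (fun x : ℝ => x - ξ) 1 u := (hasDerivAt_id u).sub_const ξ
  have h3 := (((h2.pow 3).const_mul ϱ).const_add (ξ ^ 2 / 6)).const_mul (5 / 4 : ℝ)
  have h5 := h3.add (h1.div_const 2)
  refine h5.congr_deriv ?_
  simp only [Pout]
  push_cast
  ring

lemma hasDerivAt_Fout' (ξ ϱ u : ℝ) : HasDerivAt (Fout' ξ ϱ) (Pout' ξ ϱ u) u := by
  have h1 : HasDerivAt (fun x : ℝ => x ^ 2) (2 * u) u := by simpa using hasDerivAt_pow 2 u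
  have h2 : HasDerivAt (fun x : ℝ => -x - ξ) (-1) u := ((hasDerivAt_id u).neg).sub_const ξ
  have h3 := (((h2.pow 3).const_mul ϱ).const_add (ξ ^ 2 / 6)).const_mul (5 / 4 : ℝ)
  have h5 := h3.add (h1.div_const 2)
  refine h5.congr_deriv ?_
  simp only [Pout']
  push_cast
  ring

lemma hasDerivAt_Pin {ξ : ℝ} (hξ : ξ ≠ 0) (u : ℝ) :
    HasDerivAt (Pin ξ) (1 + 5 / 4 * ((1 - u ^ 2 / ξ ^ 2) * (1 - 5 * u ^ 2 / ξ ^ 2))) u := by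
  have h1 : HasDerivAt (fun x : ℝ => x ^ 2) (2 * u) u := by simpa using hasDerivAt_pow 2 u
  have h2 : HasDerivAt (fun x : ℝ => 1 - x ^ 2 / ξ ^ 2) (-(2 * u / ξ ^ 2)) u := by
    simpa using (h1.div_const (ξ ^ 2)).const_sub 1
  have h3 := ((hasDerivAt_id u).mul (h2.pow 2)).const_mul (5 / 4 : ℝ)
  have h5 := h3.add (hasDerivAt_id u)
  refine h5.congr_deriv ?_
  push_cast
  norm_num [id]
  field_simp
  ring

lemma hasDerivAt_Pout (ξ ϱ u : ℝ) : HasDerivAt (Pout ξ ϱ) (1 + 15 / 2 * ϱ * (u - ξ)) u := by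
  have h2 : HasDerivAt (fun x : ℝ => x - ξ) 1 u := (hasDerivAt_id u).sub_const ξ
  have h3 := ((h2.pow 2).const_mul (15 / 4 * ϱ)).add (hasDerivAt_id u)
  refine h3.congr_deriv ?_
  push_cast
  ring

lemma hasDerivAt_Pout' (ξ ϱ u : ℝ) : HasDerivAt (Pout' ξ ϱ) (1 + 15 / 2 * ϱ * (-u - ξ)) u := by
  have h2 : HasDerivAt (fun x : ℝ => -x - ξ) (-1) u := ((hasDerivAt_id u).neg).sub_const ξ
  have h3 := (((h2.pow 2).const_mul (15 / 4 * ϱ)).neg).add (hasDerivAt_id u)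
  refine h3.congr_deriv ?_
  push_cast
  ring

lemma f_eq_Fin {ξ ϱ x : ℝ} (hx : |x| ≤ ξ) :
    (5 / 4) * tukeyLoss ξ ϱ x + x ^ 2 / 2 = Fin' ξ x := by
  simp [tukeyLoss, Fin', hx]

lemma f_eq_Fout {ξ ϱ x : ℝ} (hξ : 0 < ξ) (hx : ξ ≤ x) :
    (5 / 4) * tukeyLoss ξ ϱ x + x ^ 2 / 2 = Fout ξ ϱ x := by
  rcases eq_or_lt_of_le hx with h | h
  · subst h
    have habs : |ξ| ≤ ξ := le_of_eq (abs_of_pos hξ)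
    rw [f_eq_Fin habs]
    simp only [Fin', Fout]
    have h0 : ξ ≠ 0 := ne_of_gt hξ
    field_simp
    norm_num
  · have h1 : ¬ |x| ≤ ξ := not_le.2 (lt_of_lt_of_le h (le_abs_self x))
    simp only [tukeyLoss, if_neg h1, Fout]
    rw [abs_of_pos (lt_trans hξ h)]

lemma f_eq_Fout' {ξ ϱ x : ℝ} (hξ : 0 < ξ) (hx : x ≤ -ξ) :
    (5 / 4) * tukeyLoss ξ ϱ x + x ^ 2 / 2 = Fout' ξ ϱ x := by
  rcases eq_or_lt_of_le hx with h | h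
  · subst h
    have habs : |(-ξ)| ≤ ξ := by rw [abs_neg, abs_of_pos hξ]
    rw [f_eq_Fin habs]
    simp only [Fin', Fout']
    have h0 : ξ ≠ 0 := ne_of_gt hξ
    field_simp
    norm_num
  · have hxneg : x < 0 := by linarith
    have h1 : ¬ |x| ≤ ξ := by rw [abs_of_neg hxneg]; push_neg; linarith
    simp only [tukeyLoss, if_neg h1, Fout']
    rw [abs_of_neg hxneg]

lemma phi_eq_Pin {ξ ϱ x : ℝ} (hx : |x| ≤ ξ) : tukeyPhi ξ ϱ x = Pin ξ x := by
  simp [tukeyPhi, Pin, hx]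

lemma phi_eq_Pout {ξ ϱ x : ℝ} (hξ : 0 < ξ) (hx : ξ ≤ x) : tukeyPhi ξ ϱ x = Pout ξ ϱ x := by
  rcases eq_or_lt_of_le hx with h | h
  · subst h
    have habs : |ξ| ≤ ξ := le_of_eq (abs_of_pos hξ)
    rw [phi_eq_Pin habs]
    simp only [Pin, Pout]
    have h0 : ξ ≠ 0 := ne_of_gt hξ
    field_simp
    norm_num
  · have h1 : ¬ |x| ≤ ξ := not_le.2 (lt_of_lt_of_le h (le_abs_self x))
    have h0 : (0:ℝ) ≤ x := le_of_lt (lt_trans hξ h)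
    simp [tukeyPhi, if_neg h1, h0, Pout]

lemma phi_eq_Pout' {ξ ϱ x : ℝ} (hξ : 0 < ξ) (hx : x ≤ -ξ) : tukeyPhi ξ ϱ x = Pout' ξ ϱ x := by
  rcases eq_or_lt_of_le hx with h | h
  · subst h
    have habs : |(-ξ)| ≤ ξ := by rw [abs_neg, abs_of_pos hξ]
    rw [phi_eq_Pin habs]
    simp only [Pin, Pout']
    have h0 : ξ ≠ 0 := ne_of_gt hξ
    field_simp
    norm_num
  · have hxneg : x < 0 := by linarith
    have h1 : ¬ |x| ≤ ξ := by rw [abs_of_neg hxneg]; push_neg; linarith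
    have h0 : ¬ (0:ℝ) ≤ x := not_le.2 hxneg
    simp [tukeyPhi, if_neg h1, h0, Pout']

lemma ev_Iic_abs_le {ξ : ℝ} (hξ : 0 < ξ) : ∀ᶠ x in nhdsWithin ξ (Set.Iic ξ), |x| ≤ ξ := by
  have ha : ∀ᶠ x in nhds ξ, -ξ < x := eventually_gt_nhds (by linarith)
  filter_upwards [eventually_nhdsWithin_of_eventually_nhds ha, eventually_mem_nhdsWithin]
    with x h1 h2
  exact abs_le.2 ⟨le_of_lt h1, h2⟩

lemma ev_Ici_abs_le {ξ : ℝ} (hξ : 0 < ξ) : ∀ᶠ x in nhdsWithin (-ξ) (Set.Ici (-ξ)), |x| ≤ ξ := by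
  have ha : ∀ᶠ x in nhds (-ξ), x < ξ := eventually_lt_nhds (by linarith)
  filter_upwards [eventually_nhdsWithin_of_eventually_nhds ha, eventually_mem_nhdsWithin]
    with x h1 h2
  exact abs_le.2 ⟨h2, le_of_lt h1⟩

lemma pin_eq_pout (ξ ϱ : ℝ) (hξ : ξ ≠ 0) : Pin ξ ξ = Pout ξ ϱ ξ := by
  simp only [Pin, Pout]
  field_simp
  norm_num

lemma pin_eq_pout' (ξ ϱ : ℝ) (hξ : ξ ≠ 0) : Pin ξ (-ξ) = Pout' ξ ϱ (-ξ) := by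
  simp only [Pin, Pout']
  field_simp
  norm_num

/-- The function `u ↦ (5/4) L_T(u) + u²/2` has derivative `tukeyPhi` everywhere. -/
lemma hasDerivAt_f {ξ ϱ : ℝ} (hξ : 0 < ξ) (u : ℝ) :
    HasDerivAt (fun x => (5 / 4) * tukeyLoss ξ ϱ x + x ^ 2 / 2) (tukeyPhi ξ ϱ u) u := by
  have hξ' : ξ ≠ 0 := ne_of_gt hξ
  rcases lt_trichotomy (|u|) ξ with hu | hu | hu
  · have hev : ∀ᶠ x in nhds u, |x| < ξ := continuous_abs.continuousAt.eventually_lt_const hu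
    rw [phi_eq_Pin (le_of_lt hu)]
    exact (hasDerivAt_Fin hξ' u).congr_of_eventuallyEq
      (hev.mono fun x hx => f_eq_Fin (le_of_lt hx))
  · obtain h | h := (abs_eq (le_of_lt hξ)).mp hu
    · subst h
      rw [phi_eq_Pin (le_of_eq hu)]
      apply glueDeriv (f1 := Fin' u) (f2 := Fout u ϱ)
      · exact (ev_Iic_abs_le hξ).mono fun x hx => f_eq_Fin hx
      · filter_upwards [eventually_mem_nhdsWithin] with x hx
        exact f_eq_Fout hξ hx
      · exact f_eq_Fin (le_of_eq hu)
      · exact f_eq_Fout hξ le_rfl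
      · exact hasDerivAt_Fin hξ' u
      · rw [pin_eq_pout u ϱ hξ']
        exact hasDerivAt_Fout u ϱ u
    · subst h
      have habs : |(-ξ)| ≤ ξ := by rw [abs_neg, abs_of_pos hξ]
      rw [phi_eq_Pin habs]
      apply glueDeriv (f1 := Fout' ξ ϱ) (f2 := Fin' ξ)
      · filter_upwards [eventually_mem_nhdsWithin] with x hx
        exact f_eq_Fout' hξ hx
      · exact (ev_Ici_abs_le hξ).mono fun x hx => f_eq_Fin hx
      · exact f_eq_Fout' hξ le_rfl
      · exact f_eq_Fin habs
      · rw [pin_eq_pout' ξ ϱ hξ']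
        exact hasDerivAt_Fout' ξ ϱ (-ξ)
      · exact hasDerivAt_Fin hξ' (-ξ)
  · rcases lt_abs.mp hu with h | h
    · have hev : ∀ᶠ x in nhds u, ξ < x := eventually_gt_nhds h
      rw [phi_eq_Pout hξ (le_of_lt h)]
      exact (hasDerivAt_Fout ξ ϱ u).congr_of_eventuallyEq
        (hev.mono fun x hx => f_eq_Fout hξ (le_of_lt hx))
    · have h' : u < -ξ := by linarith
      have hev : ∀ᶠ x in nhds u, x < -ξ := eventually_lt_nhds h'
      rw [phi_eq_Pout' hξ (le_of_lt h')]
      exact (hasDerivAt_Fout' ξ ϱ u).congr_of_eventuallyEq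
        (hev.mono fun x hx => f_eq_Fout' hξ (le_of_lt hx))

lemma psi_eq_pin' {ξ ϱ x : ℝ} (hx : |x| ≤ ξ) :
    tukeyPsi ξ ϱ x = 1 + 5 / 4 * ((1 - x ^ 2 / ξ ^ 2) * (1 - 5 * x ^ 2 / ξ ^ 2)) := by
  simp [tukeyPsi, hx]

/-- `tukeyPhi` has derivative `tukeyPsi` everywhere. -/
lemma hasDerivAt_phi {ξ ϱ : ℝ} (hξ : 0 < ξ) (u : ℝ) :
    HasDerivAt (tukeyPhi ξ ϱ) (tukeyPsi ξ ϱ u) u := by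
  have hξ' : ξ ≠ 0 := ne_of_gt hξ
  rcases lt_trichotomy (|u|) ξ with hu | hu | hu
  · have hev : ∀ᶠ x in nhds u, |x| < ξ := continuous_abs.continuousAt.eventually_lt_const hu
    rw [psi_eq_pin' (le_of_lt hu)]
    exact (hasDerivAt_Pin hξ' u).congr_of_eventuallyEq
      (hev.mono fun x hx => phi_eq_Pin (le_of_lt hx))
  · obtain h | h := (abs_eq (le_of_lt hξ)).mp hu
    · subst h
      have hval : tukeyPsi u ϱ u = 1 := by
        rw [psi_eq_pin' (le_of_eq hu)]
        field_simp
        norm_num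
      rw [hval]
      apply glueDeriv (f1 := Pin u) (f2 := Pout u ϱ)
      · exact (ev_Iic_abs_le hξ).mono fun x hx => phi_eq_Pin hx
      · filter_upwards [eventually_mem_nhdsWithin] with x hx
        exact phi_eq_Pout hξ hx
      · exact phi_eq_Pin (le_of_eq hu)
      · exact phi_eq_Pout hξ le_rfl
      · have := hasDerivAt_Pin hξ' u
        convert this using 1
        field_simp
        norm_num
      · have := hasDerivAt_Pout u ϱ u
        convert this using 1
        simp
    · subst h
      have habs : |(-ξ)| ≤ ξ := by rw [abs_neg, abs_of_pos hξ]
      have hval : tukeyPsi ξ ϱ (-ξ) = 1 := by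
        rw [psi_eq_pin' habs]
        field_simp
        norm_num
      rw [hval]
      apply glueDeriv (f1 := Pout' ξ ϱ) (f2 := Pin ξ)
      · filter_upwards [eventually_mem_nhdsWithin] with x hx
        exact phi_eq_Pout' hξ hx
      · exact (ev_Ici_abs_le hξ).mono fun x hx => phi_eq_Pin hx
      · exact phi_eq_Pout' hξ le_rfl
      · exact phi_eq_Pin habs
      · have := hasDerivAt_Pout' ξ ϱ (-ξ)
        convert this using 1
        ring
      · have := hasDerivAt_Pin hξ' (-ξ)
        convert this using 1
        field_simp
        norm_num
  · have h1 : ¬ |u| ≤ ξ := not_le.2 hu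
    rcases lt_abs.mp hu with h | h
    · have hev : ∀ᶠ x in nhds u, ξ < x := eventually_gt_nhds h
      have hval : tukeyPsi ξ ϱ u = 1 + 15 / 2 * ϱ * (u - ξ) := by
        simp only [tukeyPsi, if_neg h1]
        rw [abs_of_pos (lt_trans hξ h)]
      rw [hval]
      exact (hasDerivAt_Pout ξ ϱ u).congr_of_eventuallyEq
        (hev.mono fun x hx => phi_eq_Pout hξ (le_of_lt hx))
    · have h' : u < -ξ := by linarith
      have hev : ∀ᶠ x in nhds u, x < -ξ := eventually_lt_nhds h'
      have hval : tukeyPsi ξ ϱ u = 1 + 15 / 2 * ϱ * (-u - ξ) := by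
        simp only [tukeyPsi, if_neg h1]
        rw [abs_of_neg (by linarith : u < 0)]
      rw [hval]
      exact (hasDerivAt_Pout' ξ ϱ u).congr_of_eventuallyEq
        (hev.mono fun x hx => phi_eq_Pout' hξ (le_of_lt hx))

lemma psi_nonneg {ξ ϱ : ℝ} (hξ : 0 < ξ) (hϱ : 0 < ϱ) (u : ℝ) : 0 ≤ tukeyPsi ξ ϱ u := by
  unfold tukeyPsi
  split_ifs with h
  · have key : 1 + 5 / 4 * ((1 - u ^ 2 / ξ ^ 2) * (1 - 5 * u ^ 2 / ξ ^ 2)) =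
        (5 * (u ^ 2 / ξ ^ 2) - 3) ^ 2 / 4 := by ring
    rw [key]
    positivity
  · have : ξ < |u| := not_le.mp h
    nlinarith

/-- The (modified) Tukey biweight loss is `(5/4)`-weakly convex:
`u ↦ (5/4) L_T(u) + u²/2` is convex. -/
theorem tukey_weaklyConvex (ξ ϱ : ℝ) (hξ : 0 < ξ) (hϱ : 0 < ϱ) :
    ConvexOn ℝ Set.univ (fun u => (5 / 4) * tukeyLoss ξ ϱ u + u ^ 2 / 2) := by
  have hf : Differentiable ℝ (fun u => (5 / 4) * tukeyLoss ξ ϱ u + u ^ 2 / 2) :=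
    fun u => (hasDerivAt_f hξ u).differentiableAt
  have hderiv : deriv (fun u => (5 / 4) * tukeyLoss ξ ϱ u + u ^ 2 / 2) = tukeyPhi ξ ϱ :=
    funext fun u => (hasDerivAt_f hξ u).deriv
  have hmono : Monotone (tukeyPhi ξ ϱ) := by
    apply monotone_of_deriv_nonneg (fun u => (hasDerivAt_phi hξ u).differentiableAt)
    intro u
    rw [(hasDerivAt_phi hξ u).deriv]
    exact psi_nonneg hξ hϱ u
  exact Monotone.convexOn_univ_of_deriv hf (hderiv ▸ hmono)
end

section
/- Let f : ℝ → ℝ be bounded below with P_f(ω) ≠ ∅ for all ω. Then for any z ∈ P_f(ω), the Moreau envelope satisfies M_f(ω) = f(z) + (1/2)(z − ω)². Moreover, if f is pseudo-Lipschitz of order k and bounded below, then any z ∈ P_f(ω) satisfies |z − ω| ≤ √(c₁ + c₂|ω|²) for constants c₁, c₂ depending only on f, and ω ↦ M_f(ω) is pseudo-Lipschitz of finite order. -/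
/-- `g` is pseudo-Lipschitz of order `k`. -/
def PseudoLipschitz (g : ℝ → ℝ) (k : ℕ) : Prop :=
  ∃ L : ℝ, ∀ x y : ℝ,
    |g x - g y| ≤ L * (1 + |x| ^ (k - 1) + |y| ^ (k - 1)) * |x - y|

/-- For `f` bounded below with `P_f(ω) ≠ ∅` for all `ω`:
(1) for `z ∈ P_f(ω)`, `M_f(ω) = f z + (z − ω)²/2`; (2) if `f` is pseudo-Lipschitz of
order `k`, there are constants `c₁, c₂` with `|z − ω| ≤ √(c₁ + c₂ |ω|²)` for any
`z ∈ P_f(ω)`, and the Moreau envelope `M_f` is pseudo-Lipschitz of finite order. -/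
theorem moreau_pseudoLipschitz (f : ℝ → ℝ) (C : ℝ) (hbdd : ∀ x, C ≤ f x)
    (hne : ∀ ω : ℝ,
      {z : ℝ | ∀ z' : ℝ, (ω - z) ^ 2 / 2 + f z ≤ (ω - z') ^ 2 / 2 + f z'}.Nonempty) :
    (∀ ω z : ℝ, (∀ z' : ℝ, (ω - z) ^ 2 / 2 + f z ≤ (ω - z') ^ 2 / 2 + f z') →
      sInf (Set.range fun z' => (ω - z') ^ 2 / 2 + f z') = f z + (z - ω) ^ 2 / 2) ∧
    (∀ k : ℕ, PseudoLipschitz f k →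
      (∃ c₁ c₂ : ℝ, ∀ ω z : ℝ,
        (∀ z' : ℝ, (ω - z) ^ 2 / 2 + f z ≤ (ω - z') ^ 2 / 2 + f z') →
        |z - ω| ≤ Real.sqrt (c₁ + c₂ * |ω| ^ 2)) ∧
      ∃ k' : ℕ, PseudoLipschitz
        (fun ω => sInf (Set.range fun z' => (ω - z') ^ 2 / 2 + f z')) k') := by
  have hbb : ∀ ω : ℝ, BddBelow (Set.range fun z' => (ω - z') ^ 2 / 2 + f z') := by
    intro ω
    refine ⟨C, ?_⟩
    rintro b ⟨z', rfl⟩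
    have := hbdd z'
    nlinarith [sq_nonneg (ω - z')]
  have hMval : ∀ ω z : ℝ, (∀ z' : ℝ, (ω - z) ^ 2 / 2 + f z ≤ (ω - z') ^ 2 / 2 + f z') →
      sInf (Set.range fun z' => (ω - z') ^ 2 / 2 + f z') = (ω - z) ^ 2 / 2 + f z := by
    intro ω z hz
    refine le_antisymm (csInf_le (hbb ω) ⟨z, rfl⟩) ?_
    refine le_csInf ⟨_, ⟨z, rfl⟩⟩ ?_
    rintro b ⟨z', rfl⟩
    exact hz z'
  have hdist : ∀ ω z : ℝ, (∀ z' : ℝ, (ω - z) ^ 2 / 2 + f z ≤ (ω - z') ^ 2 / 2 + f z') →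
      |z - ω| ≤ Real.sqrt (2 * (f 0 - C) + 1 * |ω| ^ 2) := by
    intro ω z hz
    have h0 := hz 0
    have hC := hbdd z
    have h1 : (z - ω) ^ 2 ≤ 2 * (f 0 - C) + 1 * |ω| ^ 2 := by
      nlinarith [sq_abs ω]
    calc |z - ω| = Real.sqrt ((z - ω) ^ 2) := (Real.sqrt_sq_eq_abs _).symm
      _ ≤ _ := Real.sqrt_le_sqrt h1
  refine ⟨?_, ?_⟩
  · intro ω z hz
    rw [hMval ω z hz]; ring
  intro k _hk
  refine ⟨⟨2 * (f 0 - C), 1, hdist⟩, 2, ?_⟩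
  set A : ℝ := 2 * (f 0 - C) with hA
  have hA0 : 0 ≤ A := by have := hbdd 0; rw [hA]; linarith
  set L : ℝ := Real.sqrt A + 3 / 2 with hL
  refine ⟨L, ?_⟩
  intro x y
  set M : ℝ → ℝ := fun ω => sInf (Set.range fun z' => (ω - z') ^ 2 / 2 + f z') with hM
  have key : ∀ a b : ℝ, M a - M b ≤ L * (1 + |a| + |b|) * |a - b| := by
    intro a b
    obtain ⟨z, hz⟩ := hne b
    have hMb : M b = (b - z) ^ 2 / 2 + f z := hMval b z hz
    have hMa : M a ≤ (a - z) ^ 2 / 2 + f z := csInf_le (hbb a) ⟨z, rfl⟩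
    have hd : |z - b| ≤ Real.sqrt A + |b| := by
      have h1 := hdist b z hz
      have h2 : Real.sqrt (A + 1 * |b| ^ 2) ≤ Real.sqrt A + |b| := by
        have h3 : A + 1 * |b| ^ 2 ≤ (Real.sqrt A + |b|) ^ 2 := by
          nlinarith [Real.sq_sqrt hA0, Real.sqrt_nonneg A, abs_nonneg b]
        calc Real.sqrt (A + 1 * |b| ^ 2) ≤ Real.sqrt ((Real.sqrt A + |b|) ^ 2) :=
              Real.sqrt_le_sqrt h3
          _ = abs (Real.sqrt A + |b|) := Real.sqrt_sq_eq_abs _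
          _ = Real.sqrt A + |b| := abs_of_nonneg (by positivity)
      exact h1.trans h2
    have hstep : M a - M b ≤ ((a - b) ^ 2 - 2 * (a - b) * (z - b)) / 2 := by
      calc M a - M b ≤ ((a - z) ^ 2 / 2 + f z) - ((b - z) ^ 2 / 2 + f z) := by
            rw [hMb]; linarith
        _ = ((a - b) ^ 2 - 2 * (a - b) * (z - b)) / 2 := by ring
    have hprod : -(|a - b| * |z - b|) ≤ (a - b) * (z - b) := by
      rw [← abs_mul]; exact neg_abs_le _
    have habsub : |a - b| ≤ |a| + |b| := by
      have := abs_add_le a (-b); simpa [← sub_eq_add_neg] using this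
    have h5 : |a - b| * |a - b| ≤ (|a| + |b|) * |a - b| :=
      mul_le_mul_of_nonneg_right habsub (abs_nonneg _)
    have h6 : |a - b| * |z - b| ≤ |a - b| * (Real.sqrt A + |b|) :=
      mul_le_mul_of_nonneg_left hd (abs_nonneg _)
    have hsq : (a - b) ^ 2 = |a - b| * |a - b| := by
      rw [sq]; exact (abs_mul_abs_self _).symm
    have h7 : M a - M b ≤ (|a - b| * |a - b| + 2 * (|a - b| * |z - b|)) / 2 := by
      rw [hsq] at hstep; linarith
    rw [hL]
    nlinarith [h5, h6, h7, abs_nonneg (a - b),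
      mul_nonneg (Real.sqrt_nonneg A) (mul_nonneg (abs_nonneg a) (abs_nonneg (a - b))),
      mul_nonneg (Real.sqrt_nonneg A) (mul_nonneg (abs_nonneg b) (abs_nonneg (a - b))),
      mul_nonneg (Real.sqrt_nonneg A) (abs_nonneg (a - b)),
      mul_nonneg (abs_nonneg a) (abs_nonneg (a - b)),
      mul_nonneg (abs_nonneg b) (abs_nonneg (a - b))]
  have h1 := key x y
  have h2 := key y x
  rw [abs_sub_comm y x] at h2
  simp only [show (2:ℕ) - 1 = 1 from rfl, pow_one]
  rw [abs_sub_le_iff]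
  constructor
  · simpa using h1
  · have : L * (1 + |y| + |x|) * |x - y| = L * (1 + |x| + |y|) * |x - y| := by ring
    simpa [this] using h2
end
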